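/- Let V be a finite-dimensional real vector space with dim_ℝ V = 2n + r and let L ⊆ 𝕋_ℂV be a lagrangian subspace with real index r, order s, and maximal type n. Then there exists a real form B ∈ Λ²V* such that L = e^B(E ⊕ Ann(E)), where E := pr_{V_ℂ}(L) and Ann(E) := {ξ ∈ (V_ℂ)* : ξ|_E = 0}. -/

import Mathlib

open TensorProduct Module

noncomputable section

namespace CDirac


/-- The real generalized tangent space `V ⊕ V*`. -/
abbrev TR (V : Type*) [AddCommGroup V] [Module ℝ V] := V × (V →ₗ[ℝ] ℝ)

variable {V : Type*} [AddCommGroup V] [Module ℝ V]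

/-- The canonical pairing `⟨X+ξ, Y+η⟩ = (η X + ξ Y)/2` on `𝕋V`. -/
def pairR (a b : TR V) : ℝ := (b.2 a.1 + a.2 b.1) / 2

lemma pairR_add_left (a a' b : TR V) : pairR (a + a') b = pairR a b + pairR a' b := by
  simp only [pairR, Prod.fst_add, Prod.snd_add, map_add, LinearMap.add_apply]
  ring

lemma pairR_smul_left (c : ℝ) (a b : TR V) : pairR (c • a) b = c * pairR a b := by
  simp only [pairR, Prod.smul_fst, Prod.smul_snd, map_smul, LinearMap.smul_apply,
    smul_eq_mul]
  ring

/-- Orthogonal complement with respect to the pairing on `𝕋V`. -/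
def orthR (L : Submodule ℝ (TR V)) : Submodule ℝ (TR V) where
  carrier := {a | ∀ b ∈ L, pairR a b = 0}
  zero_mem' := fun b _ => by simp [pairR]
  add_mem' := fun {a a'} ha ha' b hb => by
    rw [pairR_add_left, ha b hb, ha' b hb, add_zero]
  smul_mem' := fun c a ha b hb => by rw [pairR_smul_left, ha b hb, mul_zero]

/-- A real lagrangian subspace: `L = L^⊥`. -/
def IsLagrangianR (L : Submodule ℝ (TR V)) : Prop := L = orthR L

/-- An isotropic subspace of `𝕋V`. -/
def IsIsotropicR (K : Submodule ℝ (TR V)) : Prop := ∀ a ∈ K, ∀ b ∈ K, pairR a b = 0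

/-- The quotient `K^⊥/K`. -/
abbrev quotK (K : Submodule ℝ (TR V)) :=
  @HasQuotient.Quotient _ _ (Submodule.hasQuotient (R := ℝ) (M := ↥(orthR K)))
    (K.comap (orthR K).subtype)

/-- The quotient map `K^⊥ → K^⊥/K`. -/
def mkK (K : Submodule ℝ (TR V)) : ↥(orthR K) →ₗ[ℝ] quotK K :=
  @Submodule.mkQ ℝ (↥(orthR K)) _ (Submodule.addCommGroup _) (Submodule.module _)
    (K.comap (orthR K).subtype)




/-- The complexification `V_ℂ = ℂ ⊗_ℝ V`. -/
abbrev Cx (V : Type*) [AddCommGroup V] [Module ℝ V] := ℂ ⊗[ℝ] V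

/-- The complex dual `(V_ℂ)^*`. -/
abbrev DualC (V : Type*) [AddCommGroup V] [Module ℝ V] := Cx V →ₗ[ℂ] ℂ

/-- The complexified generalized tangent space `𝕋_ℂ V = V_ℂ ⊕ (V_ℂ)^*`. -/
abbrev TCx (V : Type*) [AddCommGroup V] [Module ℝ V] := Cx V × DualC V

/-- The ℂ-bilinear pairing on `𝕋_ℂ V`. -/
def pairC (a b : TCx V) : ℂ := (b.2 a.1 + a.2 b.1) / 2

lemma pairC_add_left (a a' b : TCx V) : pairC (a + a') b = pairC a b + pairC a' b := by
  simp only [pairC, Prod.fst_add, Prod.snd_add, map_add, LinearMap.add_apply]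
  ring

lemma pairC_smul_left (c : ℂ) (a b : TCx V) : pairC (c • a) b = c * pairC a b := by
  simp only [pairC, Prod.smul_fst, Prod.smul_snd, map_smul, LinearMap.smul_apply,
    smul_eq_mul]
  ring

/-- Orthogonal complement with respect to the ℂ-bilinear pairing on `𝕋_ℂ V`. -/
def orthC (L : Submodule ℂ (TCx V)) : Submodule ℂ (TCx V) where
  carrier := {a | ∀ b ∈ L, pairC a b = 0}
  zero_mem' := fun b _ => by simp [pairC]
  add_mem' := fun {a a'} ha ha' b hb => by
    rw [pairC_add_left, ha b hb, ha' b hb, add_zero]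
  smul_mem' := fun c a ha b hb => by rw [pairC_smul_left, ha b hb, mul_zero]

/-- A complex lagrangian subspace: `L = L^⊥`. -/
def IsLagrangianC (L : Submodule ℂ (TCx V)) : Prop := L = orthC L

private lemma conjCxAux_smul (z : ℂ) (x : Cx V) :
    TensorProduct.map Complex.conjAe.toLinearMap LinearMap.id (z • x) =
      starRingEnd ℂ z • TensorProduct.map Complex.conjAe.toLinearMap LinearMap.id x := by
  induction x using TensorProduct.induction_on with
  | zero => simp
  | tmul w v => simp [smul_tmul', smul_eq_mul, Complex.conjAe_coe, map_mul]
  | add x y hx hy => simp only [smul_add, map_add, hx, hy]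

/-- Conjugation on `V_ℂ`, as a `conj`-semilinear map. -/
def conjCx : Cx V →ₛₗ[starRingEnd ℂ] Cx V where
  toFun := TensorProduct.map Complex.conjAe.toLinearMap LinearMap.id
  map_add' := map_add _
  map_smul' := conjCxAux_smul

lemma conjCx_smul (z : ℂ) (x : Cx V) :
    conjCx (z • x) = starRingEnd ℂ z • conjCx x := conjCxAux_smul z x

/-- Conjugation of a complex linear functional. -/
def conjDualFun (ξ : DualC V) : DualC V where
  toFun x := starRingEnd ℂ (ξ (conjCx x))
  map_add' x y := by simp
  map_smul' z x := by
    show starRingEnd ℂ (ξ (conjCx (z • x))) = _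
    rw [conjCx_smul, map_smul, smul_eq_mul, map_mul, RingHom.id_apply]
    simp [smul_eq_mul]

/-- Conjugation on `(V_ℂ)^*`, as a `conj`-semilinear map. -/
def conjDual : DualC V →ₛₗ[starRingEnd ℂ] DualC V where
  toFun := conjDualFun
  map_add' ξ η := by ext x; simp [conjDualFun]
  map_smul' z ξ := by
    ext x
    simp [conjDualFun, smul_eq_mul, map_mul]

/-- Conjugation on `𝕋_ℂ V`, as a `conj`-semilinear map. -/
def conjT : TCx V →ₛₗ[starRingEnd ℂ] TCx V where
  toFun a := (conjCx a.1, conjDual a.2)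
  map_add' a b := by simp [Prod.ext_iff]
  map_smul' z a := by
    simp [Prod.ext_iff, Prod.smul_fst, Prod.smul_snd, map_smulₛₗ]

instance : RingHomSurjective (starRingEnd ℂ) :=
  ⟨fun z => ⟨starRingEnd ℂ z, by simp⟩⟩

/-- The conjugate `L̄` of a ℂ-subspace of `𝕋_ℂ V`. -/
def conjSub (L : Submodule ℂ (TCx V)) : Submodule ℂ (TCx V) := L.map conjT

/-- The conjugate `Ē` of a ℂ-subspace of `V_ℂ`. -/
def conjE (E : Submodule ℂ (Cx V)) : Submodule ℂ (Cx V) := E.map conjCx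

/-- The canonical inclusion `V → V_ℂ`, `v ↦ 1 ⊗ v`. -/
def iV : V →ₗ[ℝ] Cx V := TensorProduct.mk ℝ ℂ V 1





/-- ℝ-linear auxiliary version of the ℂ-linear extension of a real functional. -/
def dualExtAux (α : V →ₗ[ℝ] ℝ) : Cx V →ₗ[ℝ] ℂ :=
  TensorProduct.lift
    (LinearMap.mk₂ ℝ (fun z v => z * (α v : ℂ))
      (fun z w v => by push_cast; ring)
      (fun r z v => by simp only [Complex.real_smul]; ring)
      (fun z v w => by push_cast [map_add]; ring)
      (fun r z v => by simp only [map_smul, smul_eq_mul, Complex.real_smul]; push_cast; ring))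

private lemma dualExtAux_smulC (α : V →ₗ[ℝ] ℝ) (z : ℂ) (x : Cx V) :
    dualExtAux α (z • x) = z * dualExtAux α x := by
  induction x using TensorProduct.induction_on with
  | zero => simp
  | tmul w v =>
      simp only [dualExtAux, smul_tmul', lift.tmul, LinearMap.mk₂_apply, smul_eq_mul]
      ring
  | add x y hx hy => simp only [smul_add, map_add, hx, hy]; ring

/-- The ℂ-linear extension of a real functional `α : V → ℝ` to `V_ℂ`. -/
def dualExtFun (α : V →ₗ[ℝ] ℝ) : DualC V where
  toFun := dualExtAux α
  map_add' := map_add _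
  map_smul' z x := by simpa using dualExtAux_smulC α z x

private lemma dualExtFun_tmul (α : V →ₗ[ℝ] ℝ) (z : ℂ) (v : V) :
    dualExtFun α (z ⊗ₜ[ℝ] v) = z * (α v : ℂ) := by
  simp [dualExtFun, dualExtAux]

/-- The ℂ-linear extension map `V^* → (V_ℂ)^*`, as an ℝ-linear map. -/
def dualExt : (V →ₗ[ℝ] ℝ) →ₗ[ℝ] DualC V where
  toFun := dualExtFun
  map_add' α β := by
    apply LinearMap.ext; intro x
    induction x using TensorProduct.induction_on with
    | zero => simp
    | tmul w v =>
        simp only [dualExtFun_tmul, LinearMap.add_apply]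
        push_cast
        ring
    | add x y hx hy =>
        simp only [map_add, LinearMap.add_apply] at *
        rw [hx, hy]
  map_smul' r α := by
    apply LinearMap.ext; intro x
    induction x using TensorProduct.induction_on with
    | zero => simp
    | tmul w v =>
        simp only [dualExtFun_tmul, RingHom.id_apply, LinearMap.smul_apply,
          LinearMap.smul_apply, smul_eq_mul, Complex.real_smul]
        push_cast
        ring
    | add x y hx hy =>
        simp only [map_add, RingHom.id_apply, LinearMap.smul_apply, smul_eq_mul] at *
        rw [hx, hy]

/-- The canonical inclusion `𝕋V → 𝕋_ℂV`. -/
def iT : TR V →ₗ[ℝ] TCx V where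
  toFun a := (iV a.1, dualExt a.2)
  map_add' a b := by simp [Prod.ext_iff]
  map_smul' r a := by simp [Prod.ext_iff]



/-- Auxiliary ℝ-linear version of the ℂ-bilinear extension of a real bilinear form. -/
def bilinExtAux (B : V →ₗ[ℝ] V →ₗ[ℝ] ℝ) : Cx V →ₗ[ℝ] DualC V :=
  TensorProduct.lift
    (LinearMap.mk₂ ℝ (fun z v => z • dualExt (B v))
      (fun z w v => by simp only [add_smul])
      (fun r z v => by simp only [smul_assoc])
      (fun z v w => by simp only [map_add, smul_add])
      (fun r z v => by simp only [map_smul]; exact smul_comm z r _))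

private lemma bilinExtAux_smulC (B : V →ₗ[ℝ] V →ₗ[ℝ] ℝ) (z : ℂ) (x : Cx V) :
    bilinExtAux B (z • x) = z • bilinExtAux B x := by
  induction x using TensorProduct.induction_on with
  | zero => simp
  | tmul w v =>
      simp only [bilinExtAux, smul_tmul', lift.tmul, LinearMap.mk₂_apply, smul_eq_mul,
        mul_smul]
  | add x y hx hy => simp only [smul_add, map_add, hx, hy]

/-- The ℂ-bilinear extension of a real bilinear form `B : V × V → ℝ` to `V_ℂ`. -/
def bilinExt (B : V →ₗ[ℝ] V →ₗ[ℝ] ℝ) : Cx V →ₗ[ℂ] DualC V where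
  toFun := bilinExtAux B
  map_add' := map_add _
  map_smul' z x := by simpa using bilinExtAux_smulC B z x

/-- The `B`-transformation `e^B(X+ξ) = X + ξ + B̃(X,·)` of `𝕋_ℂV`, for a real `B`. -/
def eB (B : V →ₗ[ℝ] V →ₗ[ℝ] ℝ) : TCx V →ₗ[ℂ] TCx V where
  toFun a := (a.1, a.2 + bilinExt B a.1)
  map_add' a b := by
    simp only [Prod.fst_add, Prod.snd_add, map_add, Prod.mk_add_mk, Prod.mk.injEq]
    exact ⟨trivial, by abel⟩
  map_smul' z a := by
    simp only [Prod.smul_fst, Prod.smul_snd, map_smul, RingHom.id_apply, Prod.smul_mk,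
      Prod.mk.injEq, smul_add]

/-- The real `B`-transformation `e^B(X+α) = X + α + B(X,·)` of `𝕋V`. -/
def eBR (B : V →ₗ[ℝ] V →ₗ[ℝ] ℝ) : TR V →ₗ[ℝ] TR V where
  toFun a := (a.1, a.2 + B a.1)
  map_add' a b := by
    simp only [Prod.fst_add, Prod.snd_add, map_add, Prod.mk_add_mk, Prod.mk.injEq]
    exact ⟨trivial, by abel⟩
  map_smul' r a := by
    simp only [Prod.smul_fst, Prod.smul_snd, map_smul, RingHom.id_apply, Prod.smul_mk,
      Prod.mk.injEq, smul_add]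


/-- The range `E = pr_{V_ℂ}(L)` of a subspace of `𝕋_ℂV`. -/
def Esub (L : Submodule ℂ (TCx V)) : Submodule ℂ (Cx V) :=
  L.map (LinearMap.fst ℂ (Cx V) (DualC V))

/-- The real index `r = dim_ℂ (L ∩ L̄)`. -/
def riL (L : Submodule ℂ (TCx V)) : ℕ := finrank ℂ ↥(L ⊓ conjSub L)

/-- The real part `K = (L ∩ L̄) ∩ 𝕋V`, as a subspace of `𝕋V`. -/
def Ksub (L : Submodule ℂ (TCx V)) : Submodule ℝ (TR V) :=
  ((L ⊓ conjSub L).restrictScalars ℝ).comap iT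

/-- The distribution `D = (E + Ē) ∩ V`, as a subspace of `V`. -/
def Dsub (L : Submodule ℂ (TCx V)) : Submodule ℝ V :=
  ((Esub L ⊔ conjE (Esub L)).restrictScalars ℝ).comap iV

/-- The distribution `Δ = (E ∩ Ē) ∩ V`, as a subspace of `V`. -/
def DeltaSub (L : Submodule ℂ (TCx V)) : Submodule ℝ V :=
  ((Esub L ⊓ conjE (Esub L)).restrictScalars ℝ).comap iV

/-- The order `s = dim V - dim D`. -/
def orderL (L : Submodule ℂ (TCx V)) : ℕ := finrank ℝ V - finrank ℝ ↥(Dsub L)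

/-- The (normalized) type `k = dim_ℂ(E + Ē) - dim_ℂ E`. -/
def typeL (L : Submodule ℂ (TCx V)) : ℕ :=
  finrank ℂ ↥(Esub L ⊔ conjE (Esub L)) - finrank ℂ ↥(Esub L)


end CDirac

/-!
A lagrangian `L` is the graph, over `E = pr(L)` and modulo `Ann E`, of an alternating form `ε`
on `E`; hence `L = e^B(E ⊕ Ann E)` as soon as the complexification of `B` agrees with `ε` on `E`.
Such a real `B` exists once `ε(x̄, ȳ) = conj ε(x, y)` on `E ∩ Ē`: glue `ε` on `E` with its
conjugate on `Ē`, average the result with its own conjugate, and take the real part on `V`.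
That reality condition holds because maximal type makes `L ∩ L̄` project onto `E ∩ Ē` (a
dimension count), and the conjugate of a point of `L ∩ L̄` lies again in `L`.
-/

section Gluing

variable {K W M : Type*} [Field K] [AddCommGroup W] [Module K W] [AddCommGroup M] [Module K M]

theorem LinearMap.exists_extend_of_eqOn_inf (E F : Submodule K W) (f : E →ₗ[K] M)
    (g : F →ₗ[K] M) (h : ∀ (x : E) (y : F), (x : W) = y → f x = g y) :
    ∃ φ : W →ₗ[K] M, φ ∘ₗ E.subtype = f ∧ φ ∘ₗ F.subtype = g := by
  let u := LinearPMap.sup ⟨E, f⟩ ⟨F, g⟩ h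
  obtain ⟨φ, hφ⟩ := LinearMap.exists_extend u.toFun
  have hu : ∀ x : u.domain, φ x = u x := fun x => LinearMap.congr_fun hφ x
  refine ⟨φ, LinearMap.ext fun x => ?_, LinearMap.ext fun y => ?_⟩
  · exact (hu ⟨x, le_sup_left (a := E) x.2⟩).trans
      ((LinearPMap.left_le_sup ⟨E, f⟩ ⟨F, g⟩ h).2 rfl).symm
  · exact (hu ⟨y, le_sup_right (b := F) y.2⟩).trans
      ((LinearPMap.right_le_sup ⟨E, f⟩ ⟨F, g⟩ h).2 rfl).symm

theorem Submodule.exists_proj_mapsTo_inf (E F : Submodule K W) :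
    ∃ p : W →ₗ[K] E, (∀ x : E, p x = x) ∧ ∀ y ∈ F, (p y : W) ∈ E ⊓ F := by
  obtain ⟨q, hq⟩ := (Submodule.inclusion (inf_le_right : E ⊓ F ≤ F)).exists_leftInverse_of_injective
    (Submodule.ker_inclusion _ _ _)
  have hqP : ∀ (y : F) (hy : (y : W) ∈ E ⊓ F), q y = ⟨y, hy⟩ := fun y hy =>
    LinearMap.congr_fun hq ⟨y, hy⟩
  obtain ⟨p, hpE, hpF⟩ := LinearMap.exists_extend_of_eqOn_inf E F LinearMap.id
    (Submodule.inclusion inf_le_left ∘ₗ q) fun x y hxy => by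
      have hy : (y : W) ∈ E ⊓ F := ⟨hxy ▸ x.2, y.2⟩
      simp only [LinearMap.id_apply, LinearMap.comp_apply, hqP y hy]
      exact Subtype.ext hxy
  refine ⟨p, fun x => LinearMap.congr_fun hpE x, fun y hy => ?_⟩
  rw [show p y = _ from LinearMap.congr_fun hpF ⟨y, hy⟩]
  exact (q ⟨y, hy⟩).2

theorem LinearMap.IsAlt.exists_glue {E F : Submodule K W} {α β : W →ₗ[K] W →ₗ[K] M}
    (hα : α.IsAlt) (hβ : β.IsAlt) (h : ∀ x ∈ E ⊓ F, ∀ y ∈ E ⊓ F, α x y = β x y) :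
    ∃ γ : W →ₗ[K] W →ₗ[K] M, γ.IsAlt ∧ (∀ x ∈ E, ∀ y ∈ E, γ x y = α x y) ∧
      ∀ x ∈ F, ∀ y ∈ F, γ x y = β x y := by
  obtain ⟨p, hpE, hpF⟩ := E.exists_proj_mapsTo_inf F
  obtain ⟨q, hqF, hqE⟩ := F.exists_proj_mapsTo_inf E
  set s := E.subtype ∘ₗ p
  set t := F.subtype ∘ₗ q
  have hsE : ∀ x ∈ E, s x = x := fun x hx => congrArg Subtype.val (hpE ⟨x, hx⟩)
  have htF : ∀ x ∈ F, t x = x := fun x hx => congrArg Subtype.val (hqF ⟨x, hx⟩)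
  have htE : ∀ x ∈ E, t x ∈ E ⊓ F := fun x hx => inf_comm F E ▸ hqE x hx
  have hsF : ∀ x ∈ F, s x ∈ E ⊓ F := hpF
  -- On `E`, `t` lands in `E ⊓ F`, where the last two terms cancel; symmetrically on `F`.
  refine ⟨α.compl₁₂ s s + β.compl₁₂ t t - α.compl₁₂ (t ∘ₗ s) (t ∘ₗ s), fun x => ?_,
    fun x hx y hy => ?_, fun x hx y hy => ?_⟩
  · simp [hα (s x), hβ (t x), hα (t (s x))]
  · have := h _ (htE x hx) _ (htE y hy)
    simp only [add_apply, sub_apply, compl₁₂_apply, comp_apply, hsE x hx, hsE y hy]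
    rw [this]
    abel
  · simp only [add_apply, sub_apply, compl₁₂_apply, comp_apply, htF x hx, htF y hy,
      htF _ (hsF x hx).2, htF _ (hsF y hy).2]
    abel

end Gluing

namespace CDirac

variable {V : Type*} [AddCommGroup V] [Module ℝ V]

@[simp]
lemma conjCx_tmul (z : ℂ) (v : V) : conjCx (z ⊗ₜ[ℝ] v) = starRingEnd ℂ z ⊗ₜ[ℝ] v := by
  simp [conjCx, Complex.conjAe_coe]

@[simp]
lemma conjCx_conjCx (x : Cx V) : conjCx (conjCx x) = x := by
  induction x using TensorProduct.induction_on with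
  | zero => simp
  | tmul z v => simp
  | add a b ha hb => rw [map_add, map_add, ha, hb]

@[simp]
lemma conjCx_iV (v : V) : conjCx (iV v) = iV v := by
  simp [iV]

lemma conjDual_apply (η : DualC V) (x : Cx V) :
    conjDual η x = starRingEnd ℂ (η (conjCx x)) := rfl

@[simp]
lemma conjDual_conjDual (η : DualC V) : conjDual (conjDual η) = η := by
  ext x
  simp [conjDual_apply]

@[simp]
lemma conjT_apply (a : TCx V) : conjT a = (conjCx a.1, conjDual a.2) := rfl

lemma mem_conjSub {L : Submodule ℂ (TCx V)} {a : TCx V} : a ∈ conjSub L ↔ conjT a ∈ L := by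
  refine ⟨?_, fun h => ⟨conjT a, h, by simp⟩⟩
  rintro ⟨b, hb, rfl⟩
  simpa using hb

lemma mem_conjE {E : Submodule ℂ (Cx V)} {x : Cx V} : x ∈ conjE E ↔ conjCx x ∈ E :=
  ⟨by rintro ⟨y, hy, rfl⟩; simpa using hy, fun h => ⟨conjCx x, h, conjCx_conjCx x⟩⟩

@[simp]
lemma conjCx_mem_conjE {E : Submodule ℂ (Cx V)} {x : Cx V} : conjCx x ∈ conjE E ↔ x ∈ E := by
  simp [mem_conjE]

lemma conjDual_mem_dualAnnihilator_iff {E : Submodule ℂ (Cx V)} {η : DualC V} :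
    conjDual η ∈ E.dualAnnihilator ↔ η ∈ (conjE E).dualAnnihilator := by
  simp only [Submodule.mem_dualAnnihilator, conjDual_apply, map_eq_zero, mem_conjE]
  exact ⟨fun h x hx => by simpa using h _ hx, fun h x hx => h _ (by simpa using hx)⟩

lemma finrank_conjE (E : Submodule ℂ (Cx V)) : finrank ℂ (conjE E) = finrank ℂ E := by
  let e := Submodule.equivMapOfInjective conjCx
    (Function.LeftInverse.injective (g := conjCx) conjCx_conjCx) E
  have := rank_eq_of_equiv_equiv (starRingEnd ℂ) e.toAddEquiv.symm
    (Function.Involutive.bijective Complex.conj_conj) fun z x => by simp [map_smulₛₗ]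
  exact congrArg Cardinal.toNat this

def conjForm (β : Cx V →ₗ[ℂ] DualC V) : Cx V →ₗ[ℂ] DualC V :=
  (conjDual.comp β).comp conjCx

@[simp]
lemma conjForm_apply (β : Cx V →ₗ[ℂ] DualC V) (x y : Cx V) :
    conjForm β x y = starRingEnd ℂ (β (conjCx x) (conjCx y)) := rfl

def reForm (β : Cx V →ₗ[ℂ] DualC V) : V →ₗ[ℝ] V →ₗ[ℝ] ℝ :=
  ((β.restrictScalars₁₂ ℝ ℝ).compl₁₂ iV iV).compr₂ Complex.reLm

@[simp]
lemma reForm_apply (β : Cx V →ₗ[ℂ] DualC V) (v w : V) :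
    reForm β v w = (β (iV v) (iV w)).re := rfl

lemma tmul_eq_smul_iV (z : ℂ) (v : V) : z ⊗ₜ[ℝ] v = z • iV v := by
  simp [iV, smul_tmul']

@[simp]
lemma bilinExt_iV_iV (B : V →ₗ[ℝ] V →ₗ[ℝ] ℝ) (v w : V) :
    bilinExt B (iV v) (iV w) = B v w := by
  simp [bilinExt, bilinExtAux, dualExt, dualExtFun, dualExtAux, iV]

lemma bilinExt_reForm {β : Cx V →ₗ[ℂ] DualC V}
    (hβ : ∀ x y, β (conjCx x) (conjCx y) = starRingEnd ℂ (β x y)) :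
    bilinExt (reForm β) = β := by
  refine TensorProduct.AlgebraTensorModule.ext fun z v =>
    TensorProduct.AlgebraTensorModule.ext fun w u => ?_
  have hreal : starRingEnd ℂ (β (iV v) (iV u)) = β (iV v) (iV u) := by
    simpa using (hβ (iV v) (iV u)).symm
  simp only [tmul_eq_smul_iV, map_smul, LinearMap.smul_apply, bilinExt_iV_iV, reForm_apply,
    Complex.conj_eq_iff_re.mp hreal]

theorem exists_isAlt_bilinExt_eq {E : Submodule ℂ (Cx V)} {ε : Cx V →ₗ[ℂ] DualC V}
    (hε : ε.IsAlt) (hreal : ∀ x ∈ E ⊓ conjE E, ∀ y ∈ E ⊓ conjE E,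
      ε (conjCx x) (conjCx y) = starRingEnd ℂ (ε x y)) :
    ∃ B : V →ₗ[ℝ] V →ₗ[ℝ] ℝ, B.IsAlt ∧ ∀ x ∈ E, ∀ y ∈ E, bilinExt B x y = ε x y := by
  have hε' : (conjForm ε).IsAlt := fun x => by simp [hε (conjCx x)]
  obtain ⟨γ, hγ, hγE, hγE'⟩ := hε.exists_glue hε' (F := conjE E) fun x hx y hy => by
    rw [conjForm_apply, hreal x hx y hy, Complex.conj_conj]
  set β := (2⁻¹ : ℂ) • (γ + conjForm γ)
  have hβ : ∀ x y, β (conjCx x) (conjCx y) = starRingEnd ℂ (β x y) := fun x y => by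
    simp [β, add_comm, map_ofNat]
  refine ⟨reForm β, fun v => by simp [β, hγ (iV v)], fun x hx y hy => ?_⟩
  have hconj : γ (conjCx x) (conjCx y) = starRingEnd ℂ (ε x y) := by
    simpa using hγE' _ (conjCx_mem_conjE.mpr hx) _ (conjCx_mem_conjE.mpr hy)
  rw [bilinExt_reForm hβ]
  simp only [β, LinearMap.smul_apply, LinearMap.add_apply, conjForm_apply, hconj, hγE x hx y hy,
    Complex.conj_conj, smul_eq_mul]
  ring

variable {L : Submodule ℂ (TCx V)}

lemma fst_mem_Esub {a : TCx V} (ha : a ∈ L) : a.1 ∈ Esub L := ⟨a, ha, rfl⟩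

namespace IsLagrangianC

lemma mem_iff (hL : IsLagrangianC L) {a : TCx V} : a ∈ L ↔ ∀ b ∈ L, pairC a b = 0 :=
  SetLike.ext_iff.mp hL a

lemma snd_apply_fst (hL : IsLagrangianC L) {a : TCx V} (ha : a ∈ L) : a.2 a.1 = 0 := by
  simpa [pairC] using hL.mem_iff.mp ha a ha

lemma mk_zero_mem_iff (hL : IsLagrangianC L) {η : DualC V} :
    ((0, η) : TCx V) ∈ L ↔ η ∈ (Esub L).dualAnnihilator := by
  rw [hL.mem_iff]
  simp only [Submodule.mem_dualAnnihilator, Esub, Submodule.mem_map, pairC, map_zero,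
    zero_add, div_eq_zero_iff, two_ne_zero, or_false, LinearMap.fst_apply, forall_exists_index,
    and_imp, forall_apply_eq_imp_iff₂]

lemma snd_apply_eq_of_fst_eq (hL : IsLagrangianC L) {a b : TCx V} (ha : a ∈ L) (hb : b ∈ L)
    (hab : a.1 = b.1) {y : Cx V} (hy : y ∈ Esub L) : a.2 y = b.2 y := by
  have hsub : a - b = (0, a.2 - b.2) := Prod.ext (sub_eq_zero.mpr hab) rfl
  have : ((0, a.2 - b.2) : TCx V) ∈ L := hsub ▸ L.sub_mem ha hb
  simpa [sub_eq_zero] using (Submodule.mem_dualAnnihilator _).mp (hL.mk_zero_mem_iff.mp this) y hy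

theorem exists_isAlt (hL : IsLagrangianC L) :
    ∃ ε : Cx V →ₗ[ℂ] DualC V, ε.IsAlt ∧ ∀ a ∈ L, ∀ y ∈ Esub L, a.2 y = ε a.1 y := by
  obtain ⟨σ, hσ⟩ : ∃ σ : Esub L →ₗ[ℂ] L, ((LinearMap.fst ℂ _ _).submoduleMap L) ∘ₗ σ = .id :=
    ((LinearMap.fst ℂ _ _).submoduleMap L).exists_rightInverse_of_surjective
      (LinearMap.range_eq_top.mpr (LinearMap.submoduleMap_surjective _ _))
  obtain ⟨p, hp⟩ := (Esub L).subtype.exists_leftInverse_of_injective (Esub L).ker_subtype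
  have hσfst : ∀ x, ((σ x : L) : TCx V).1 = x := fun x =>
    congrArg Subtype.val (LinearMap.congr_fun hσ x)
  have hpE : ∀ y ∈ Esub L, (p y : Cx V) = y := fun y hy =>
    congrArg Subtype.val (LinearMap.congr_fun hp ⟨y, hy⟩)
  refine ⟨LinearMap.lcomp ℂ ℂ ((Esub L).subtype ∘ₗ p) ∘ₗ
      (LinearMap.snd ℂ _ _ ∘ₗ L.subtype ∘ₗ σ ∘ₗ p), fun x => ?_, fun a ha y hy => ?_⟩
  · simpa [hσfst] using hL.snd_apply_fst (σ (p x)).2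
  · have hpa : p a.1 = ⟨a.1, fst_mem_Esub ha⟩ := Subtype.ext (hpE _ (fst_mem_Esub ha))
    simpa [hpE y hy, hpa] using
      hL.snd_apply_eq_of_fst_eq ha (σ _).2 (hσfst ⟨a.1, fst_mem_Esub ha⟩).symm hy

theorem eq_map_eB (hL : IsLagrangianC L) {B : V →ₗ[ℝ] V →ₗ[ℝ] ℝ}
    (hB : ∀ a ∈ L, ∀ y ∈ Esub L, a.2 y = bilinExt B a.1 y) :
    L = Submodule.map (eB B) ((Esub L).prod (Esub L).dualAnnihilator) := by
  apply le_antisymm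
  · intro a ha
    refine ⟨(a.1, a.2 - bilinExt B a.1),
      Submodule.mem_prod.mpr ⟨(fst_mem_Esub ha : a.1 ∈ Esub L), ?_⟩, by simp [eB]⟩
    refine (Submodule.mem_dualAnnihilator _).mpr fun y hy => ?_
    simp [hB a ha y hy]
  · rintro _ ⟨⟨_, ξ⟩, ⟨⟨a, ha, rfl⟩, hξ⟩, rfl⟩
    rw [hL.mem_iff]
    intro b hb
    have hξb := (Submodule.mem_dualAnnihilator _).mp hξ b.1 (fst_mem_Esub hb)
    have hab := hL.mem_iff.mp ha b hb
    simp only [eB, pairC, LinearMap.coe_mk, AddHom.coe_mk, LinearMap.fst_apply,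
      LinearMap.add_apply, hξb, zero_add] at hab ⊢
    rwa [← hB a ha b.1 (fst_mem_Esub hb)]

lemma mk_zero_mem_inf_conjSub_iff (hL : IsLagrangianC L) {η : DualC V} :
    ((0, η) : TCx V) ∈ L ⊓ conjSub L ↔ η ∈ (Esub L ⊔ conjE (Esub L)).dualAnnihilator := by
  rw [Submodule.mem_inf, mem_conjSub, Submodule.dualAnnihilator_sup_eq, Submodule.mem_inf,
    ← conjDual_mem_dualAnnihilator_iff, ← hL.mk_zero_mem_iff, ← hL.mk_zero_mem_iff]
  simp

variable [FiniteDimensional ℝ V]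

/-- The kernel of the projection `L ∩ L̄ → E ∩ Ē` is `Ann (E + Ē)`, and maximal type makes
`dim (L ∩ L̄) - dim Ann (E + Ē) = dim (E ∩ Ē)`. -/
theorem map_fst_inf_conjSub (hL : IsLagrangianC L)
    (hmax : finrank ℝ V = 2 * typeL L + riL L) :
    (L ⊓ conjSub L).map (LinearMap.fst ℂ _ _) = Esub L ⊓ conjE (Esub L) := by
  unfold typeL riL at hmax
  set E := Esub L
  set M := L ⊓ conjSub L
  set f := LinearMap.fst ℂ (Cx V) (DualC V) ∘ₗ M.subtype
  have hrange : LinearMap.range f = M.map (LinearMap.fst ℂ _ _) := by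
    rw [LinearMap.range_comp, Submodule.range_subtype]
  have hle : M.map (LinearMap.fst ℂ _ _) ≤ E ⊓ conjE E := by
    rintro _ ⟨a, ha, rfl⟩
    exact ⟨fst_mem_Esub ha.1, mem_conjE.mpr (fst_mem_Esub (mem_conjSub.mp ha.2))⟩
  let g := LinearMap.snd ℂ (Cx V) (DualC V) ∘ₗ M.subtype ∘ₗ (LinearMap.ker f).subtype
  have hg : Function.Injective g := by
    rintro ⟨⟨a, _⟩, ha⟩ ⟨⟨b, _⟩, hb⟩ hab
    exact Subtype.ext (Subtype.ext (Prod.ext (ha.trans hb.symm) hab))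
  have hgrange : LinearMap.range g = (E ⊔ conjE E).dualAnnihilator := by
    ext η
    refine ⟨?_, fun hη => ⟨⟨⟨(0, η), hL.mk_zero_mem_inf_conjSub_iff.mpr hη⟩, rfl⟩, rfl⟩⟩
    rintro ⟨⟨⟨a, haM⟩, ha⟩, rfl⟩
    have ha0 : a = (0, a.2) := Prod.ext ha rfl
    exact hL.mk_zero_mem_inf_conjSub_iff.mp (ha0 ▸ haM)
  have hker : finrank ℂ (LinearMap.ker f) = finrank ℂ (E ⊔ conjE E).dualAnnihilator :=
    hgrange ▸ (LinearEquiv.ofInjective g hg).finrank_eq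
  have h₁ := LinearMap.finrank_range_add_finrank_ker f
  have h₂ := Subspace.finrank_add_finrank_dualAnnihilator_eq (E ⊔ conjE E)
  have h₃ := Submodule.finrank_sup_add_finrank_inf_eq E (conjE E)
  have h₄ := Submodule.finrank_mono (le_sup_left : E ≤ E ⊔ conjE E)
  have h₅ := Submodule.finrank_mono hle
  have h₆ : finrank ℂ (Cx V) = finrank ℝ V := Module.finrank_baseChange
  rw [finrank_conjE] at h₃
  rw [hrange] at h₁
  exact Submodule.eq_of_le_of_finrank_eq hle (by omega)

theorem apply_conjCx_eq_conj (hL : IsLagrangianC L) (hmax : finrank ℝ V = 2 * typeL L + riL L)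
    {ε : Cx V →ₗ[ℂ] DualC V} (hε : ∀ a ∈ L, ∀ y ∈ Esub L, a.2 y = ε a.1 y) :
    ∀ x ∈ Esub L ⊓ conjE (Esub L), ∀ y ∈ Esub L ⊓ conjE (Esub L),
      ε (conjCx x) (conjCx y) = starRingEnd ℂ (ε x y) := by
  intro x hx y hy
  rw [← hL.map_fst_inf_conjSub hmax] at hx
  obtain ⟨a, ha, rfl⟩ := Submodule.mem_map.mp hx
  rw [Submodule.mem_inf, mem_conjSub] at ha
  rw [LinearMap.fst_apply, ← hε a ha.1 y hy.1]
  simpa [conjDual_apply] using (hε _ ha.2 _ (mem_conjE.mp hy.2)).symm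

end IsLagrangianC

end CDirac

open CDirac Module

theorem stmt17_general (V : Type*) [AddCommGroup V] [Module ℝ V] [FiniteDimensional ℝ V]
    (n r : ℕ) (hdim : finrank ℝ V = 2 * n + r)
    (L : Submodule ℂ (TCx V)) (hL : IsLagrangianC L)
    (hr : riL L = r) (htype : typeL L = n) :
    ∃ B : V →ₗ[ℝ] V →ₗ[ℝ] ℝ, (∀ v : V, B v v = 0) ∧
      L = Submodule.map (eB B) ((Esub L).prod (Esub L).dualAnnihilator) := by
  have hmax : finrank ℝ V = 2 * typeL L + riL L := by rw [htype, hr, hdim]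
  obtain ⟨ε, hε, hεL⟩ := hL.exists_isAlt
  obtain ⟨B, hB, hBε⟩ := exists_isAlt_bilinExt_eq hε (hL.apply_conjCx_eq_conj hmax hεL)
  exact ⟨B, hB, hL.eq_map_eB fun a ha y hy =>
    (hεL a ha y hy).trans (hBε _ (fst_mem_Esub ha) y hy).symm⟩

/-- A lagrangian `L ⊆ 𝕋_ℂV` (with `dim V = 2n + r`) of real index
`r`, order `s` and maximal type `n` is of the form `L = e^B(E ⊕ Ann E)` for some real
two-form `B`. -/
theorem stmt17 (V : Type*) [AddCommGroup V] [Module ℝ V] [FiniteDimensional ℝ V]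
    (n r s : ℕ) (hdim : finrank ℝ V = 2 * n + r)
    (L : Submodule ℂ (TCx V)) (hL : IsLagrangianC L)
    (hr : riL L = r) (hs : orderL L = s) (htype : typeL L = n) :
    ∃ B : V →ₗ[ℝ] V →ₗ[ℝ] ℝ, (∀ v : V, B v v = 0) ∧
      L = Submodule.map (eB B) ((Esub L).prod (Esub L).dualAnnihilator) :=
  stmt17_general V n r hdim L hL hr htype
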